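/- (Tonelli approximation estimate.) Let n ≥ 1, t0 ∈ ℝ, y0 ∈ ℝ^n, a, b, L > 0, let f : [t0, t0+a] × {y : ‖y − y0‖ ≤ b} → ℝ^n be continuous with ‖f(t,y)‖ ≤ L on its domain (‖·‖ the maximum norm), and set c = min{a, b/L}, I = [t0, t0+c]. Then for every integer k ≥ 2 there exists a function γ : I → ℝ^n satisfying: γ(t0) = y0; ‖γ(t) − γ(s)‖ ≤ L|t − s| for all s, t ∈ I; ‖γ(t) − y0‖ ≤ b for all t ∈ I; γ(t) = y0 for t ∈ [t0, t0 + c/k]; γ(t) = y0 + ∫_{t0}^{t − c/k} f(s, γ(s)) ds for t ∈ (t0 + c/k, t0 + c]; and max_{t ∈ I} ‖γ(t) − y0 − ∫_{t0}^{t} f(s, γ(s)) ds‖ ≤ Lc/k. -/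
import Mathlib

open Set

noncomputable def tonelliSeq (n : ℕ) (t0 : ℝ) (y0 : Fin n → ℝ) (c d : ℝ)
    (f : ℝ → (Fin n → ℝ) → (Fin n → ℝ)) : ℕ → ℝ → Fin n → ℝ
  | 0 => fun _ => y0
  | (m+1) => fun t =>
      y0 + ∫ s in t0..(max t0 (min t (t0 + c) - d)), f s (tonelliSeq n t0 y0 c d f m s)

set_option maxHeartbeats 1000000 in
/-- Tonelli approximation estimate: for each `k ≥ 2` there is a Tonelli approximate
solution `γ` which is `L`-Lipschitz, stays in the ball of radius `b`, equals `y0` on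
`[t0, t0 + c/k]`, satisfies the delayed integral equation on `(t0 + c/k, t0 + c]`,
and makes the defect functional at most `L c / k`. -/
theorem tonelli_estimate (n : ℕ) (hn : 1 ≤ n) (t0 : ℝ) (y0 : Fin n → ℝ)
    (a b L : ℝ) (ha : 0 < a) (hb : 0 < b) (hL : 0 < L)
    (f : ℝ → (Fin n → ℝ) → (Fin n → ℝ))
    (hf : ContinuousOn (fun p : ℝ × (Fin n → ℝ) => f p.1 p.2)
      (Icc t0 (t0 + a) ×ˢ Metric.closedBall y0 b))
    (hfL : ∀ t ∈ Icc t0 (t0 + a), ∀ y ∈ Metric.closedBall y0 b, ‖f t y‖ ≤ L)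
    (c : ℝ) (hc : c = min a (b / L))
    (k : ℕ) (hk : 2 ≤ k) :
    ∃ γ : ℝ → Fin n → ℝ,
      γ t0 = y0 ∧
      (∀ s ∈ Icc t0 (t0 + c), ∀ t ∈ Icc t0 (t0 + c), ‖γ t - γ s‖ ≤ L * |t - s|) ∧
      (∀ t ∈ Icc t0 (t0 + c), ‖γ t - y0‖ ≤ b) ∧
      (∀ t ∈ Icc t0 (t0 + c / k), γ t = y0) ∧
      (∀ t ∈ Ioc (t0 + c / k) (t0 + c),
        γ t = y0 + ∫ s in t0..(t - c / k), f s (γ s)) ∧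
      (∀ t ∈ Icc t0 (t0 + c),
        ‖γ t - y0 - ∫ s in t0..t, f s (γ s)‖ ≤ L * c / k) := by
  obtain ⟨j, rfl⟩ : ∃ j, k = j + 1 := ⟨k - 1, (Nat.succ_pred_eq_of_pos (by omega)).symm⟩
  have hj1 : (1:ℝ) ≤ j := by exact_mod_cast Nat.le_of_succ_le_succ hk
  have hk0 : (0:ℝ) < (j:ℝ) + 1 := by linarith
  have hkcast : ((j+1 : ℕ) : ℝ) = (j:ℝ) + 1 := by push_cast; ring
  have hc0 : 0 < c := by rw [hc]; exact lt_min ha (div_pos hb hL)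
  have hca : c ≤ a := hc ▸ min_le_left _ _
  have hcbL : L * c ≤ b := by
    have h1 : c ≤ b / L := hc ▸ min_le_right _ _
    calc L * c ≤ L * (b / L) := by nlinarith
      _ = b := by field_simp
  set d : ℝ := c / ((j+1 : ℕ) : ℝ) with hd
  have hd0 : 0 < d := by rw [hd, hkcast]; positivity
  have hdc : d ≤ c := by
    rw [hd, hkcast]; exact div_le_self hc0.le (by linarith)
  have hcd : c - d = (j:ℝ) * d := by
    rw [hd, hkcast]; field_simp; ring
  -- the clamped upper endpoint
  set u : ℝ → ℝ := fun t => max t0 (min t (t0 + c) - d) with hu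
  have hu1 : ∀ t, t0 ≤ u t := fun t => le_max_left _ _
  have hu2 : ∀ t, u t ≤ t0 + c - d := by
    intro t
    apply max_le (by linarith)
    have := min_le_right t (t0 + c); linarith
  have hu2' : ∀ t, u t ≤ t0 + c := fun t => (hu2 t).trans (by linarith)
  have huLip : ∀ s t, |u t - u s| ≤ |t - s| := by
    intro s t
    have h1 : |u t - u s| ≤ |(min t (t0+c) - d) - (min s (t0+c) - d)| := by
      rw [hu]
      have := abs_max_sub_max_le_abs (min t (t0+c) - d) (min s (t0+c) - d) t0
      simpa [max_comm] using this
    have h2 : |(min t (t0+c) - d) - (min s (t0+c) - d)| = |min t (t0+c) - min s (t0+c)| := by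
      ring_nf
    have h3 : |min t (t0+c) - min s (t0+c)| ≤ |t - s| := by
      rcases le_total t (t0+c) with h | h <;> rcases le_total s (t0+c) with h' | h' <;>
        simp [min_eq_left, min_eq_right, h, h'] <;> rw [abs_le] <;>
        constructor <;> cases abs_le.1 (le_refl |t - s|) <;> cases abs_cases (t - s) <;> linarith
    calc |u t - u s| ≤ _ := h1
      _ = _ := h2
      _ ≤ _ := h3
  have hu_eq0 : ∀ t, t ≤ t0 + d → u t = t0 := by
    intro t ht
    rw [hu]
    apply max_eq_left
    have := min_le_left t (t0 + c); linarith
  have hu_eq : ∀ t, t0 + d ≤ t → t ≤ t0 + c → u t = t - d := by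
    intro t h1 h2
    show t0 ⊔ (t ⊓ (t0 + c) - d) = t - d
    rw [min_eq_left h2]
    exact max_eq_right (by linarith)
  set γs : ℕ → ℝ → Fin n → ℝ := tonelliSeq n t0 y0 c d f with hγs
  have key : ∀ m t, γs (m+1) t = y0 + ∫ s in t0..(u t), f s (γs m s) := by
    intro m t; rw [hγs, tonelliSeq]
  have key0 : ∀ t, γs 0 t = y0 := fun t => rfl
  -- main induction: continuity, ball, Lipschitz
  have main : ∀ m, Continuous (γs m) ∧ (∀ t, γs m t ∈ Metric.closedBall y0 b) ∧
      (∀ s t, ‖γs m t - γs m s‖ ≤ L * |t - s|) := by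
    intro m
    induction m with
    | zero =>
      refine ⟨continuous_const, fun t => by simp [key0, hb.le], fun s t => by
        simp [key0]; positivity⟩
    | succ m ih =>
      obtain ⟨hcont, hball, -⟩ := ih
      have hg : ContinuousOn (fun s => f s (γs m s)) (Icc t0 (t0 + c)) := by
        have hpair : Continuous fun s : ℝ => (s, γs m s) := continuous_id.prodMk hcont
        exact ContinuousOn.comp hf hpair.continuousOn
          (fun x hx => ⟨⟨hx.1, hx.2.trans (by linarith)⟩, hball x⟩)
      have hgL : ∀ x ∈ Icc t0 (t0 + c), ‖f x (γs m x)‖ ≤ L := by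
        intro x hx
        exact hfL x ⟨hx.1, hx.2.trans (by linarith)⟩ _ (hball x)
      have hint : ∀ p q, p ∈ Icc t0 (t0 + c) → q ∈ Icc t0 (t0 + c) →
          IntervalIntegrable (fun s => f s (γs m s)) MeasureTheory.volume p q := by
        intro p q hp hq
        exact (hg.mono (uIcc_subset_Icc hp hq)).intervalIntegrable
      have hlip : ∀ s t, ‖γs (m+1) t - γs (m+1) s‖ ≤ L * |t - s| := by
        intro s t
        rw [key, key, add_sub_add_left_eq_sub,
          intervalIntegral.integral_interval_sub_left
            (hint t0 (u t) ⟨le_refl _, by linarith⟩ ⟨hu1 t, hu2' t⟩)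
            (hint t0 (u s) ⟨le_refl _, by linarith⟩ ⟨hu1 s, hu2' s⟩)]
        have hb1 : ‖∫ x in (u s)..(u t), f x (γs m x)‖ ≤ L * |u t - u s| := by
          apply intervalIntegral.norm_integral_le_of_norm_le_const
          intro x hx
          have hx' : x ∈ Icc t0 (t0 + c) :=
            uIcc_subset_Icc ⟨hu1 s, hu2' s⟩ ⟨hu1 t, hu2' t⟩ (uIoc_subset_uIcc hx)
          exact hgL x hx'
        exact hb1.trans (by nlinarith [huLip s t, abs_nonneg (t - s)])
      have hballn : ∀ t, γs (m+1) t ∈ Metric.closedBall y0 b := by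
        intro t
        rw [Metric.mem_closedBall, dist_eq_norm, key, add_sub_cancel_left]
        have hb1 : ‖∫ x in t0..(u t), f x (γs m x)‖ ≤ L * |u t - t0| := by
          apply intervalIntegral.norm_integral_le_of_norm_le_const
          intro x hx
          exact hgL x (uIcc_subset_Icc ⟨le_refl _, by linarith⟩ ⟨hu1 t, hu2' t⟩
            (uIoc_subset_uIcc hx))
        have : |u t - t0| ≤ c := by
          rw [abs_of_nonneg (by linarith [hu1 t])]; linarith [hu2' t]
        calc ‖∫ x in t0..(u t), f x (γs m x)‖ ≤ L * |u t - t0| := hb1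
          _ ≤ L * c := by nlinarith
          _ ≤ b := hcbL
      have hcontn : Continuous (γs (m+1)) := by
        have : LipschitzWith (Real.toNNReal L) (γs (m+1)) := by
          apply LipschitzWith.of_dist_le_mul
          intro x y
          rw [dist_eq_norm, Real.coe_toNNReal L hL.le]
          simpa [Real.dist_eq] using hlip y x
        exact this.continuous
      exact ⟨hcontn, hballn, hlip⟩
  -- agreement
  have agree : ∀ m : ℕ, ∀ t : ℝ, t ≤ t0 + (m:ℝ) * d → γs (m+1) t = γs m t := by
    intro m
    induction m with
    | zero =>
      intro t ht
      simp only [Nat.cast_zero, zero_mul, add_zero] at ht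
      rw [key, hu_eq0 t (by linarith), intervalIntegral.integral_same, add_zero, key0]
    | succ m ih =>
      intro t ht
      rw [key, key]
      congr 1
      apply intervalIntegral.integral_congr
      intro s hs
      have hs' : s ∈ Icc t0 (u t) := by rwa [uIcc_of_le (hu1 t)] at hs
      have hsm : s ≤ t0 + m * d := by
        have h1 : u t ≤ max t0 (t - d) := by
          apply max_le (le_max_left _ _)
          have := min_le_left t (t0 + c)
          have := le_max_right t0 (t - d); linarith
        have h2 : max t0 (t - d) ≤ t0 + m * d := by
          apply max_le
          · nlinarith [Nat.cast_nonneg (α := ℝ) m, hd0.le]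
          · push_cast at ht ⊢; linarith
        linarith [hs'.2]
      show f s (γs (m+1) s) = f s (γs m s)
      rw [ih s hsm]
  -- the solution
  refine ⟨γs (j+1), ?_, ?_, ?_, ?_, ?_, ?_⟩
  · rw [key, hu_eq0 t0 (by linarith), intervalIntegral.integral_same, add_zero]
  · intro s _ t _; exact (main (j+1)).2.2 s t
  · intro t _
    have := (main (j+1)).2.1 t
    rwa [Metric.mem_closedBall, dist_eq_norm] at this
  · intro t ht
    rw [key, hu_eq0 t ht.2, intervalIntegral.integral_same, add_zero]
  · intro t ht
    rw [key, hu_eq t ht.1.le ht.2]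
    congr 1
    apply intervalIntegral.integral_congr
    intro s hs
    have hs' : s ∈ Icc t0 (t - d) := by
      rwa [uIcc_of_le (by linarith [ht.1, hd0])] at hs
    have hsj : s ≤ t0 + (j:ℝ) * d := by
      have := hs'.2; have := ht.2; linarith [hcd]
    show f s (γs j s) = f s (γs (j+1) s)
    rw [agree j s hsj]
  · intro t ht
    have hcont := (main (j+1)).1
    have hball := (main (j+1)).2.1
    have hg : ContinuousOn (fun s => f s (γs (j+1) s)) (Icc t0 (t0 + c)) := by
      have hpair : Continuous fun s : ℝ => (s, γs (j+1) s) := continuous_id.prodMk hcont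
      exact ContinuousOn.comp hf hpair.continuousOn
        (fun x hx => ⟨⟨hx.1, hx.2.trans (by linarith)⟩, hball x⟩)
    have hgL : ∀ x ∈ Icc t0 (t0 + c), ‖f x (γs (j+1) x)‖ ≤ L := by
      intro x hx
      exact hfL x ⟨hx.1, hx.2.trans (by linarith)⟩ _ (hball x)
    have hint : ∀ p q, p ∈ Icc t0 (t0 + c) → q ∈ Icc t0 (t0 + c) →
        IntervalIntegrable (fun s => f s (γs (j+1) s)) MeasureTheory.volume p q := by
      intro p q hp hq
      exact (hg.mono (uIcc_subset_Icc hp hq)).intervalIntegrable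
    have hLck : L * c / ((j+1:ℕ):ℝ) = L * d := by
      rw [hd]; ring
    rw [hLck]
    rcases le_or_gt t (t0 + d) with h | h
    · -- γ t = y0
      have hγt : γs (j+1) t = y0 := by
        rw [key, hu_eq0 t h, intervalIntegral.integral_same, add_zero]
      rw [hγt, sub_self, zero_sub, norm_neg]
      have hb1 : ‖∫ s in t0..t, f s (γs (j+1) s)‖ ≤ L * |t - t0| := by
        apply intervalIntegral.norm_integral_le_of_norm_le_const
        intro x hx
        exact hgL x (uIcc_subset_Icc ⟨le_refl _, by linarith⟩ ⟨ht.1, ht.2⟩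
          (uIoc_subset_uIcc hx))
      have : |t - t0| ≤ d := by rw [abs_of_nonneg (by linarith [ht.1])]; linarith
      calc ‖∫ s in t0..t, f s (γs (j+1) s)‖ ≤ L * |t - t0| := hb1
        _ ≤ L * d := by nlinarith
    · -- delayed equation case
      have heq : γs (j+1) t = y0 + ∫ s in t0..(t - d), f s (γs (j+1) s) := by
        rw [key, hu_eq t h.le ht.2]
        congr 1
        apply intervalIntegral.integral_congr
        intro s hs
        have hs' : s ∈ Icc t0 (t - d) := by
          rwa [uIcc_of_le (by linarith)] at hs
        have hsj : s ≤ t0 + (j:ℝ) * d := by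
          have := hs'.2; have := ht.2; linarith [hcd]
        show f s (γs j s) = f s (γs (j+1) s)
        rw [agree j s hsj]
      rw [heq, add_sub_cancel_left, intervalIntegral.integral_interval_sub_left
        (hint t0 (t - d) ⟨le_refl _, by linarith⟩ ⟨by linarith, by linarith [ht.2]⟩)
        (hint t0 t ⟨le_refl _, by linarith⟩ ⟨ht.1, ht.2⟩)]
      have hb1 : ‖∫ s in t..(t - d), f s (γs (j+1) s)‖ ≤ L * |t - d - t| := by
        apply intervalIntegral.norm_integral_le_of_norm_le_const
        intro x hx
        exact hgL x (uIcc_subset_Icc ⟨ht.1, ht.2⟩ ⟨by linarith, by linarith [ht.2]⟩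
          (uIoc_subset_uIcc hx))
      have : |t - d - t| = d := by rw [abs_of_nonpos (by linarith)]; ring
      rw [this] at hb1
      exact hb1
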